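/- The Banach algebra c₀ of scalar sequences converging to zero, with pointwise operations and supremum norm, is weakly amenable: every bounded derivation D : c₀ → ℓ¹ (= c₀*) is inner, hence zero. -/

import Mathlib

set_option maxHeartbeats 1000000

open Filter Topology ContinuousLinearMap NormedSpace

/-- The topological dual of a seminormed space `E` (as in the older Mathlib). -/
abbrev NormedSpace.Dual (𝕜 : Type*) (E : Type*) [NontriviallyNormedField 𝕜]
    [SeminormedAddCommGroup E] [NormedSpace 𝕜 E] : Type _ := E →L[𝕜] 𝕜

noncomputable section ArensSetup

/-- The adjoint (transpose) of a continuous linear map between normed spaces. -/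
def adjCLM {E F : Type*} [SeminormedAddCommGroup E] [NormedSpace ℝ E]
    [SeminormedAddCommGroup F] [NormedSpace ℝ F] (T : E →L[ℝ] F) :
    Dual ℝ F →L[ℝ] Dual ℝ E :=
  (ContinuousLinearMap.compL ℝ E F ℝ).flip T

@[simp] theorem adjCLM_apply {E F : Type*} [SeminormedAddCommGroup E] [NormedSpace ℝ E]
    [SeminormedAddCommGroup F] [NormedSpace ℝ F] (T : E →L[ℝ] F) (g : Dual ℝ F) (x : E) :
    adjCLM T g x = g (T x) := rfl

/-- One-step Arens-type adjoint of a bounded bilinear map: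
`ext1 β g' e = g' ∘ (β e)`. -/
def ext1 {E F G : Type*} [SeminormedAddCommGroup E] [NormedSpace ℝ E]
    [SeminormedAddCommGroup F] [NormedSpace ℝ F] [SeminormedAddCommGroup G] [NormedSpace ℝ G]
    (β : E →L[ℝ] F →L[ℝ] G) : Dual ℝ G →L[ℝ] E →L[ℝ] Dual ℝ F :=
  ((ContinuousLinearMap.compL ℝ F G ℝ).flip.comp β).flip

@[simp] theorem ext1_apply {E F G : Type*} [SeminormedAddCommGroup E] [NormedSpace ℝ E]
    [SeminormedAddCommGroup F] [NormedSpace ℝ F] [SeminormedAddCommGroup G] [NormedSpace ℝ G]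
    (β : E →L[ℝ] F →L[ℝ] G) (g' : Dual ℝ G) (e : E) (f : F) :
    ext1 β g' e f = g' (β e f) := rfl

/-- Triple adjoint: the (first) Arens extension of a bounded bilinear map to the
second duals. -/
def ext3 {E F G : Type*} [SeminormedAddCommGroup E] [NormedSpace ℝ E]
    [SeminormedAddCommGroup F] [NormedSpace ℝ F] [SeminormedAddCommGroup G] [NormedSpace ℝ G]
    (β : E →L[ℝ] F →L[ℝ] G) :
    Dual ℝ (Dual ℝ E) →L[ℝ] Dual ℝ (Dual ℝ F) →L[ℝ] Dual ℝ (Dual ℝ G) :=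
  ext1 (ext1 (ext1 β))

variable (A : Type*) [NonUnitalNormedRing A] [NormedSpace ℝ A]
  [SMulCommClass ℝ A A] [IsScalarTower ℝ A A] [CompleteSpace A]

/-- The first (left) Arens product on `A**`: `⟨a''b'', a'⟩ = ⟨a'', b''a'⟩`. -/
def fArens : Dual ℝ (Dual ℝ A) →L[ℝ] Dual ℝ (Dual ℝ A) →L[ℝ] Dual ℝ (Dual ℝ A) :=
  ext3 (ContinuousLinearMap.mul ℝ A)

/-- The second (right) Arens product on `A**`: `⟨a''∘b'', a'⟩ = ⟨b'', a'∘a''⟩`. -/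
def sArens : Dual ℝ (Dual ℝ A) →L[ℝ] Dual ℝ (Dual ℝ A) →L[ℝ] Dual ℝ (Dual ℝ A) :=
  (ext3 (ContinuousLinearMap.mul ℝ A).flip).flip

/-- `A` is Arens regular when the two Arens products on `A**` coincide. -/
def ArensRegular : Prop := fArens A = sArens A

variable {A}

/-- Weak-star to weak continuity for a map from the dual of `E` into `F`. -/
def WStarToWCont {E F : Type*} [SeminormedAddCommGroup E] [NormedSpace ℝ E]
    [SeminormedAddCommGroup F] [NormedSpace ℝ F] (f : Dual ℝ E → F) : Prop :=
  Continuous fun x : WeakDual ℝ E => toWeakSpace ℝ F (f (WeakDual.toStrongDual x))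

variable (A)

/-- The second adjoint `T'' : A** → A**` of `T : A → A`. -/
def secondAdj (T : A →L[ℝ] A) : Dual ℝ (Dual ℝ A) →L[ℝ] Dual ℝ (Dual ℝ A) :=
  adjCLM (adjCLM T)

/-- Left action of `A` on `A*`: `⟨a·a', b⟩ = ⟨a', ba⟩`. -/
def dualLeft : A →L[ℝ] Dual ℝ A →L[ℝ] Dual ℝ A :=
  (ext1 (ContinuousLinearMap.mul ℝ A).flip).flip

/-- Right action of `A` on `A*`: `⟨a'·a, b⟩ = ⟨a', ab⟩`. -/
def dualRight : Dual ℝ A →L[ℝ] A →L[ℝ] Dual ℝ A :=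
  ext1 (ContinuousLinearMap.mul ℝ A)

/-- Left action of `A**` (first Arens product) on `A***`. -/
def dualLeft2 : Dual ℝ (Dual ℝ A) →L[ℝ] Dual ℝ (Dual ℝ (Dual ℝ A)) →L[ℝ]
    Dual ℝ (Dual ℝ (Dual ℝ A)) :=
  (ext1 (fArens A).flip).flip

/-- Right action of `A**` (first Arens product) on `A***`. -/
def dualRight2 : Dual ℝ (Dual ℝ (Dual ℝ A)) →L[ℝ] Dual ℝ (Dual ℝ A) →L[ℝ]
    Dual ℝ (Dual ℝ (Dual ℝ A)) :=
  ext1 (fArens A)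

end ArensSetup

section BimoduleSetup

set_option maxHeartbeats 1000000

open Filter Topology ContinuousLinearMap NormedSpace

/-- A Banach `A`-bimodule: bounded bilinear left and right actions satisfying the
usual compatibility axioms. -/
structure BanachBimodule (A X : Type*) [NonUnitalNormedRing A] [NormedSpace ℝ A]
    [SMulCommClass ℝ A A] [IsScalarTower ℝ A A]
    [NormedAddCommGroup X] [NormedSpace ℝ X] [CompleteSpace X] where
  l : A →L[ℝ] X →L[ℝ] X
  r : X →L[ℝ] A →L[ℝ] X
  l_mul : ∀ a b x, l (a * b) x = l a (l b x)
  r_mul : ∀ x a b, r (r x a) b = r x (a * b)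
  l_r : ∀ a x b, l a (r x b) = r (l a x) b

variable {A X : Type*} [NonUnitalNormedRing A] [NormedSpace ℝ A]
  [SMulCommClass ℝ A A] [IsScalarTower ℝ A A] [CompleteSpace A]
  [NormedAddCommGroup X] [NormedSpace ℝ X] [CompleteSpace X]

/-- Left action of `A` on `X*`: `⟨a·f, x⟩ = ⟨f, x·a⟩`. -/
noncomputable def modDualLeft (M : BanachBimodule A X) : A →L[ℝ] Dual ℝ X →L[ℝ] Dual ℝ X :=
  (ext1 M.r.flip).flip

/-- Right action of `A` on `X*`: `⟨f·a, x⟩ = ⟨f, a·x⟩`. -/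
noncomputable def modDualRight (M : BanachBimodule A X) : Dual ℝ X →L[ℝ] A →L[ℝ] Dual ℝ X :=
  ext1 M.l

/-- Left action of `A**` on `X**` (first Arens extension). -/
noncomputable def modL2 (M : BanachBimodule A X) :
    Dual ℝ (Dual ℝ A) →L[ℝ] Dual ℝ (Dual ℝ X) →L[ℝ] Dual ℝ (Dual ℝ X) :=
  ext3 M.l

/-- Right action of `A**` on `X**` (first Arens extension); `modR2 M x'' a'' = x''a''`. -/
noncomputable def modR2 (M : BanachBimodule A X) :
    Dual ℝ (Dual ℝ X) →L[ℝ] Dual ℝ (Dual ℝ A) →L[ℝ] Dual ℝ (Dual ℝ X) :=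
  ext3 M.r

/-- Left action of `A**` on `X***`: `⟨a''·x''', x''⟩ = ⟨x''', x''a''⟩`. -/
noncomputable def modL3 (M : BanachBimodule A X) :
    Dual ℝ (Dual ℝ A) →L[ℝ] Dual ℝ (Dual ℝ (Dual ℝ X)) →L[ℝ] Dual ℝ (Dual ℝ (Dual ℝ X)) :=
  (ext1 (modR2 M).flip).flip

/-- Right action of `A**` on `X***`: `⟨x'''·a'', x''⟩ = ⟨x''', a''x''⟩`. -/
noncomputable def modR3 (M : BanachBimodule A X) :
    Dual ℝ (Dual ℝ (Dual ℝ X)) →L[ℝ] Dual ℝ (Dual ℝ A) →L[ℝ] Dual ℝ (Dual ℝ (Dual ℝ X)) :=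
  ext1 (modL2 M)

end BimoduleSetup

section DerivationSetup

variable {B Y : Type*} [SeminormedAddCommGroup B] [NormedSpace ℝ B]
  [SeminormedAddCommGroup Y] [NormedSpace ℝ Y]

/-- `D` is a derivation with respect to the multiplication `m` and the module
actions `l`, `r`. -/
def IsDeriv (m : B →L[ℝ] B →L[ℝ] B) (l : B →L[ℝ] Y →L[ℝ] Y)
    (r : Y →L[ℝ] B →L[ℝ] Y) (D : B →L[ℝ] Y) : Prop :=
  ∀ a b, D (m a b) = l a (D b) + r (D a) b

/-- `D` is an inner derivation: `D a = a·y − y·a` for some fixed `y`. -/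
def IsInner (l : B →L[ℝ] Y →L[ℝ] Y) (r : Y →L[ℝ] B →L[ℝ] Y) (D : B →L[ℝ] Y) : Prop :=
  ∃ y, ∀ a, D a = l a y - r y a

/-- `D` is a `T-S`-derivation: `D(ab) = T(a)·D(b) + D(a)·S(b)`. -/
def IsTSDeriv (m : B →L[ℝ] B →L[ℝ] B) (l : B →L[ℝ] Y →L[ℝ] Y)
    (r : Y →L[ℝ] B →L[ℝ] Y) (T S : B →L[ℝ] B) (D : B →L[ℝ] Y) : Prop :=
  ∀ a b, D (m a b) = l (T a) (D b) + r (D a) (S b)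

/-- `D` is an inner `T-S`-derivation: `D a = T(a)·y − y·S(a)` for some fixed `y`. -/
def IsTSInner (l : B →L[ℝ] Y →L[ℝ] Y) (r : Y →L[ℝ] B →L[ℝ] Y)
    (T S : B →L[ℝ] B) (D : B →L[ℝ] Y) : Prop :=
  ∃ y, ∀ a, D a = l (T a) y - r y (S a)

end DerivationSetup

/-!
A derivation `D` into the symmetric bimodule `A*` of a commutative algebra kills every idempotent
`e`: `D e = D (e * e) = 2 (e · D e)`, and acting by `e` once more gives `e · D e = 2 (e · D e)`,
so `e · D e = 0` and `D e = 0`. In `c₀` the idempotent unit sequences span the finitely supported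
sequences, which are dense, so a bounded derivation `c₀ → ℓ¹` vanishes, and `0` is inner.
-/

section DualModule

variable {A : Type*} [NonUnitalNormedRing A] [NormedSpace ℝ A]
  [SMulCommClass ℝ A A] [IsScalarTower ℝ A A]

theorem dualLeft_apply (a : A) (f : Dual ℝ A) (x : A) : dualLeft A a f x = f (x * a) := rfl

theorem dualRight_apply (f : Dual ℝ A) (a x : A) : dualRight A f a x = f (a * x) := rfl

theorem dualLeft_mul (a b : A) (f : Dual ℝ A) :
    dualLeft A (a * b) f = dualLeft A a (dualLeft A b f) := by
  ext x
  simp only [dualLeft_apply, mul_assoc]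

end DualModule

section Commutative

variable {A : Type*} [NonUnitalNormedCommRing A] [NormedSpace ℝ A]
  [SMulCommClass ℝ A A] [IsScalarTower ℝ A A]

theorem dualRight_eq_dualLeft (f : Dual ℝ A) (a : A) : dualRight A f a = dualLeft A a f := by
  ext x
  rw [dualRight_apply, dualLeft_apply, mul_comm]

namespace IsDeriv

variable {D : A →L[ℝ] Dual ℝ A}

theorem map_eq_zero_of_isIdempotentElem
    (hD : IsDeriv (ContinuousLinearMap.mul ℝ A) (dualLeft A) (dualRight A) D)
    {e : A} (he : IsIdempotentElem e) : D e = 0 := by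
  have hDe : D e = (2 : ℝ) • dualLeft A e (D e) := by
    have h := hD e e
    rwa [mul_apply', he.eq, dualRight_eq_dualLeft, ← two_smul ℝ] at h
  have hfix : dualLeft A e (D e) = 0 := by
    have h := congrArg (dualLeft A e) hDe
    rw [map_smul, ← dualLeft_mul, he.eq, two_smul] at h
    simpa using h
  rw [hDe, hfix, smul_zero]

theorem eq_zero_of_dense_span_isIdempotentElem
    (hD : IsDeriv (ContinuousLinearMap.mul ℝ A) (dualLeft A) (dualRight A) D)
    (hA : Dense (Submodule.span ℝ {e : A | IsIdempotentElem e} : Set A)) : D = 0 :=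
  ContinuousLinearMap.ext_on hA fun _ he => hD.map_eq_zero_of_isIdempotentElem he

end IsDeriv

end Commutative

open scoped ZeroAtInfty

namespace ZeroAtInftyContinuousMap

variable {X 𝕜 : Type*} [TopologicalSpace X] [DiscreteTopology X] [NormedField 𝕜]

variable (𝕜) in
noncomputable def single (x : X) : C₀(X, 𝕜) where
  toFun := Set.indicator {x} 1
  continuous_toFun := continuous_of_discreteTopology
  zero_at_infty' := by
    rw [cocompact_eq_cofinite]
    exact tendsto_nhds_of_eventually_eq <| (eventually_cofinite_ne x).mono fun y hy =>
      Set.indicator_of_notMem (Set.notMem_singleton_iff.mpr hy) 1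

@[simp]
theorem single_apply (x y : X) : single 𝕜 x y = Set.indicator {x} 1 y := rfl

theorem isIdempotentElem_single (x : X) : IsIdempotentElem (single 𝕜 x) := by
  ext y
  by_cases h : y = x <;> simp [h]

theorem dense_span_range_single :
    Dense (Submodule.span 𝕜 (Set.range (single 𝕜 : X → C₀(X, 𝕜))) : Set C₀(X, 𝕜)) := by
  intro f
  rw [Metric.mem_closure_iff]
  intro ε hε
  have hf : Tendsto f cofinite (𝓝 0) := by
    simpa [cocompact_eq_cofinite] using zero_at_infty f
  obtain ⟨K, hK⟩ : ∃ K : Finset X, ∀ y ∉ K, ‖f y‖ < ε / 2 := by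
    have := (Metric.tendsto_nhds.mp hf) (ε / 2) (half_pos hε)
    rw [Filter.eventually_cofinite] at this
    exact ⟨this.toFinset, fun y hy => by simpa using hy⟩
  refine ⟨∑ y ∈ K, f y • single 𝕜 y, ?_, ?_⟩
  · exact Submodule.sum_mem _ fun y _ =>
      Submodule.smul_mem _ _ (Submodule.subset_span ⟨y, rfl⟩)
  have hcoe : ⇑(∑ y ∈ K, f y • single 𝕜 y) = ∑ y ∈ K, f y • ⇑(single 𝕜 y) :=
    map_sum (⟨⟨DFunLike.coe, coe_zero⟩, coe_add⟩ : C₀(X, 𝕜) →+ X → 𝕜) _ _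
  have hdiff (z : X) : ‖(f - ∑ y ∈ K, f y • single 𝕜 y) z‖ ≤ ε / 2 := by
    rw [sub_apply, hcoe, Finset.sum_apply]
    by_cases hz : z ∈ K
    · rw [Finset.sum_eq_single_of_mem z hz fun y _ hyz => by simp [Ne.symm hyz]]
      simpa using (half_pos hε).le
    · rw [Finset.sum_eq_zero fun y hy => by simp [show z ≠ y from fun h => hz (h ▸ hy)]]
      simpa using (hK z hz).le
  rw [dist_eq_norm, ← norm_toBCF_eq_norm]
  exact ((BoundedContinuousFunction.norm_le (half_pos hε).le).2 hdiff).trans_lt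
    (half_lt_self hε)

theorem dense_span_isIdempotentElem :
    Dense (Submodule.span 𝕜 {e : C₀(X, 𝕜) | IsIdempotentElem e} : Set C₀(X, 𝕜)) :=
  dense_span_range_single.mono <|
    Submodule.span_mono <| Set.range_subset_iff.mpr isIdempotentElem_single

end ZeroAtInftyContinuousMap

/-- `c₀` is weakly amenable: every bounded derivation `D : c₀ → ℓ¹ = c₀*` is inner,
hence zero. -/
theorem c0_weaklyAmenable :
    ∀ D : (ZeroAtInftyContinuousMap ℕ ℝ) →L[ℝ] Dual ℝ (ZeroAtInftyContinuousMap ℕ ℝ),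
      IsDeriv (ContinuousLinearMap.mul ℝ (ZeroAtInftyContinuousMap ℕ ℝ)) (dualLeft (ZeroAtInftyContinuousMap ℕ ℝ)) (dualRight (ZeroAtInftyContinuousMap ℕ ℝ)) D →
      IsInner (dualLeft (ZeroAtInftyContinuousMap ℕ ℝ)) (dualRight (ZeroAtInftyContinuousMap ℕ ℝ)) D ∧ D = 0 := by
  intro D hD
  have hD0 : D = 0 :=
    hD.eq_zero_of_dense_span_isIdempotentElem ZeroAtInftyContinuousMap.dense_span_isIdempotentElem
  exact ⟨⟨0, fun a => by simp [hD0]⟩, hD0⟩
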